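/- arXiv:1605.02165 — 2 statements merged into one kernel-verified Lean document; each statement's English description precedes it below -/
import Mathlib

section
/- Let α ∈ (0,1), β > 0 and a₁, a₂ > 0, b₁, b₂ ≥ 0 with a₂b₁ = a₁b₂ (restriction (T1)) and a_i ≥ 2b_i·cosh(βπ/2)·√(1 + tan²(απ/2)·tanh²(βπ/2)) for i = 1,2 (restrictions (T3₁), (T3₂)). Then Re P(iω)·Re Q(iω) + Im P(iω)·Im Q(iω) ≥ 1 for every ω > 0 (in particular the storage modulus Re Ê(ω) is positive). -/
/-!
For `s ≠ 0`, `φ_{a,b}(s) = 1 + s^α (a + 2b cosh(iβ log s))`, so at `s = iω` we get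
`φ_{a,b}(iω) = 1 + ω^α e^{iαπ/2} (a + 2b Z)` with `Z = cosh(βπ/2 - iβ log ω)` independent of `(a, b)`.
The quantity to bound is the real inner product `⟪P, Q⟫ = 1 + Re z₂ + Re z₁ + ⟪z₂, z₁⟫`
for `P = 1 + z₂`, `Q = 1 + z₁`. By Cauchy–Schwarz,
`|Re(e^{iαπ/2} Z)| ≤ √(cos²(απ/2) cosh²(βπ/2) + sin²(απ/2) sinh²(βπ/2)) = cos(απ/2) · Ctan α β`,
so (T3) makes `Re zᵢ ≥ 0`. The common factor `ω^α e^{iαπ/2}` only scales `⟪z₂, z₁⟫` by `ω^{2α}`, and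
`⟪a₂ + 2b₂Z, a₁ + 2b₁Z⟫ = (a₂ + 2b₂ Re Z)(a₁ + 2b₁ Re Z) + 4b₁b₂ (Im Z)²`, where both factors of the
first product are nonnegative since `|Re Z| ≤ cosh(βπ/2) ≤ Ctan α β`.
-/

/-- `φ_{a,b}(s) = 1 + a·s^α + b·(s^{α+iβ} + s^{α−iβ})`, with principal complex powers. -/
noncomputable def phi (α β a b : ℝ) (s : ℂ) : ℂ :=
  1 + (a : ℂ) * s ^ (α : ℂ) +
    (b : ℂ) * (s ^ ((α : ℂ) + Complex.I * (β : ℂ)) + s ^ ((α : ℂ) - Complex.I * (β : ℂ)))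

/-- The constant `cosh(βπ/2)·√(1 + tan²(απ/2)·tanh²(βπ/2))` appearing in restrictions (T3). -/
noncomputable def Ctan (α β : ℝ) : ℝ :=
  Real.cosh (β * (Real.pi / 2)) *
    Real.sqrt (1 + (Real.tan (α * (Real.pi / 2)) * Real.tanh (β * (Real.pi / 2))) ^ 2)

open Complex
open scoped InnerProductSpace

lemma cosh_add_mul_I_re (x y : ℝ) : (cosh (x + y * I)).re = Real.cosh x * Real.cos y := by
  simp [cosh_add, cosh_mul_I, sinh_mul_I, cos_ofReal_re, cosh_ofReal_re, sin_ofReal_im]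

lemma cosh_add_mul_I_im (x y : ℝ) : (cosh (x + y * I)).im = Real.sinh x * Real.sin y := by
  simp [cosh_add, cosh_mul_I, sinh_mul_I, sin_ofReal_re, sinh_ofReal_re, cos_ofReal_im]

lemma log_I_mul_ofReal {ω : ℝ} (hω : 0 < ω) :
    log (I * ω) = Real.log ω + (Real.pi / 2 : ℝ) * I := by
  rw [mul_comm, log_ofReal_mul hω I_ne_zero, log_I]; push_cast; ring

lemma real_inner_eq_re_mul_re_add_im_mul_im (z w : ℂ) : ⟪z, w⟫_ℝ = z.re * w.re + z.im * w.im := by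
  simp [Complex.inner]; ring

lemma real_inner_mul_mul (c z w : ℂ) : ⟪c * z, c * w⟫_ℝ = normSq c * ⟪z, w⟫_ℝ := by
  simp only [real_inner_eq_re_mul_re_add_im_mul_im, mul_re, mul_im, normSq_apply]; ring

lemma one_le_real_inner_one_add {z w : ℂ} (hz : 0 ≤ z.re) (hw : 0 ≤ w.re) (hzw : 0 ≤ ⟪z, w⟫_ℝ) :
    1 ≤ ⟪1 + z, 1 + w⟫_ℝ := by
  rw [real_inner_eq_re_mul_re_add_im_mul_im] at hzw ⊢
  simp only [add_re, add_im, one_re, one_im]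
  nlinarith

lemma phi_eq_of_ne_zero (α β a b : ℝ) {s : ℂ} (hs : s ≠ 0) :
    phi α β a b s = 1 + exp (log s * α) * (a + 2 * b * cosh (log s * (I * β))) := by
  have hsplit (t : ℂ) : s ^ ((α : ℂ) + t) = exp (log s * α) * exp (log s * t) := by
    rw [cpow_def_of_ne_zero hs, mul_add, exp_add]
  rw [phi, sub_eq_add_neg, hsplit, hsplit, cpow_def_of_ne_zero hs, mul_right_comm, two_cosh]
  simp only [mul_neg]
  ring

lemma cosh_le_Ctan (α β : ℝ) : Real.cosh (β * (Real.pi / 2)) ≤ Ctan α β :=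
  le_mul_of_one_le_right (Real.cosh_pos _).le
    (Real.one_le_sqrt.2 (le_add_of_nonneg_right (sq_nonneg _)))

lemma abs_re_exp_mul_cosh_le {α : ℝ} (hα : 0 < Real.cos (α * (Real.pi / 2))) (β y : ℝ) :
    |(exp ((α * (Real.pi / 2) : ℝ) * I) * cosh ((β * (Real.pi / 2) : ℝ) + y * I)).re|
      ≤ Real.cos (α * (Real.pi / 2)) * Ctan α β := by
  set c := Real.cos (α * (Real.pi / 2))
  set s := Real.sin (α * (Real.pi / 2))
  set ch := Real.cosh (β * (Real.pi / 2))
  set sh := Real.sinh (β * (Real.pi / 2))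
  have hch : 0 < ch := Real.cosh_pos _
  have hC : c * Ctan α β = √((c * ch) ^ 2 + (s * sh) ^ 2) := by
    have hfactor : (c * ch) ^ 2 + (s * sh) ^ 2 = (c * ch) ^ 2 * (1 + (s / c * (sh / ch)) ^ 2) := by
      field_simp
    rw [hfactor, Real.sqrt_mul (sq_nonneg _), Real.sqrt_sq (mul_pos hα hch).le, Ctan,
      Real.tan_eq_sin_div_cos, Real.tanh_eq_sinh_div_cosh, mul_assoc]
  have hre : (exp ((α * (Real.pi / 2) : ℝ) * I) * cosh ((β * (Real.pi / 2) : ℝ) + y * I)).re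
      = (c * ch) * Real.cos y + (- (s * sh)) * Real.sin y := by
    rw [mul_re, exp_ofReal_mul_I_re, exp_ofReal_mul_I_im, cosh_add_mul_I_re, cosh_add_mul_I_im]
    ring
  rw [hC, hre]
  apply Real.abs_le_sqrt
  nlinarith [sq_nonneg (c * ch * Real.sin y + s * sh * Real.cos y), Real.sin_sq_add_cos_sq y]

lemma re_exp_mul_add_cosh_nonneg {α : ℝ} (hα : 0 < Real.cos (α * (Real.pi / 2))) (β y : ℝ)
    {a b : ℝ} (hb : 0 ≤ b) (hab : 2 * b * Ctan α β ≤ a) :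
    0 ≤ (exp ((α * (Real.pi / 2) : ℝ) * I) *
      (a + 2 * b * cosh ((β * (Real.pi / 2) : ℝ) + y * I))).re := by
  have hre : (exp ((α * (Real.pi / 2) : ℝ) * I) *
      (a + 2 * b * cosh ((β * (Real.pi / 2) : ℝ) + y * I))).re
        = a * Real.cos (α * (Real.pi / 2)) + 2 * b *
          (exp ((α * (Real.pi / 2) : ℝ) * I) * cosh ((β * (Real.pi / 2) : ℝ) + y * I)).re := by
    simp only [mul_add, add_re, mul_re, mul_im, exp_ofReal_mul_I_re, exp_ofReal_mul_I_im, ofReal_re,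
      ofReal_im, re_ofNat, im_ofNat]
    ring
  have hbound := neg_le_of_abs_le (abs_re_exp_mul_cosh_le hα β y)
  rw [hre]
  nlinarith [mul_le_mul_of_nonneg_left hbound (by positivity : (0 : ℝ) ≤ 2 * b)]

lemma real_inner_add_mul_nonneg (Z : ℂ) {a₁ a₂ b₁ b₂ : ℝ} (hb₁ : 0 ≤ b₁) (hb₂ : 0 ≤ b₂)
    (h₁ : 2 * b₁ * |Z.re| ≤ a₁) (h₂ : 2 * b₂ * |Z.re| ≤ a₂) :
    0 ≤ ⟪(a₂ : ℂ) + 2 * b₂ * Z, a₁ + 2 * b₁ * Z⟫_ℝ := by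
  have hre (a b : ℝ) (hb : 0 ≤ b) (h : 2 * b * |Z.re| ≤ a) : 0 ≤ a + 2 * b * Z.re := by
    nlinarith [neg_abs_le Z.re]
  have hsplit : ⟪(a₂ : ℂ) + 2 * b₂ * Z, a₁ + 2 * b₁ * Z⟫_ℝ
      = (a₂ + 2 * b₂ * Z.re) * (a₁ + 2 * b₁ * Z.re) + 4 * (b₁ * b₂) * Z.im ^ 2 := by
    simp only [real_inner_eq_re_mul_re_add_im_mul_im, add_re, add_im, mul_re, mul_im, ofReal_re,
      ofReal_im, re_ofNat, im_ofNat]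
    ring
  rw [hsplit]
  have := hre a₁ b₁ hb₁ h₁
  have := hre a₂ b₂ hb₂ h₂
  positivity

lemma phi_I_mul_ofReal (α β a b : ℝ) {ω : ℝ} (hω : 0 < ω) :
    phi α β a b (I * ω) = 1 + ((ω ^ α : ℝ) : ℂ) * exp ((α * (Real.pi / 2) : ℝ) * I) *
      (a + 2 * b * cosh ((β * (Real.pi / 2) : ℝ) + (-(β * Real.log ω) : ℝ) * I)) := by
  have hX : exp (log (I * ω) * α)
      = ((ω ^ α : ℝ) : ℂ) * exp ((α * (Real.pi / 2) : ℝ) * I) := by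
    rw [log_I_mul_ofReal hω, Real.rpow_def_of_pos hω, ofReal_exp, ← exp_add]
    congr 1
    push_cast
    ring
  have hZ : cosh (log (I * ω) * (I * β))
      = cosh ((β * (Real.pi / 2) : ℝ) + (-(β * Real.log ω) : ℝ) * I) := by
    rw [← cosh_neg, log_I_mul_ofReal hω]
    congr 1
    push_cast
    linear_combination (-(β * Real.pi / 2) : ℂ) * I_sq
  rw [phi_eq_of_ne_zero α β a b (mul_ne_zero I_ne_zero (ofReal_ne_zero.2 hω.ne')), hX, hZ]

lemma abs_cosh_add_mul_I_re_le_Ctan (α β y : ℝ) :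
    |(cosh ((β * (Real.pi / 2) : ℝ) + y * I)).re| ≤ Ctan α β := by
  rw [cosh_add_mul_I_re, abs_mul, abs_of_pos (Real.cosh_pos _)]
  exact (mul_le_of_le_one_right (Real.cosh_pos _).le (Real.abs_cos_le_one _)).trans
    (cosh_le_Ctan α β)

theorem stmt_7_general (α β a₁ a₂ b₁ b₂ : ℝ) (hα : α ∈ Set.Ioo (0:ℝ) 1)
    (hb₁ : 0 ≤ b₁) (hb₂ : 0 ≤ b₂)
    (hT3₁ : a₁ ≥ 2 * b₁ * Ctan α β) (hT3₂ : a₂ ≥ 2 * b₂ * Ctan α β) :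
    ∀ ω : ℝ, 0 < ω →
      1 ≤ (phi α β a₂ b₂ (Complex.I * (ω : ℂ))).re * (phi α β a₁ b₁ (Complex.I * (ω : ℂ))).re +
        (phi α β a₂ b₂ (Complex.I * (ω : ℂ))).im * (phi α β a₁ b₁ (Complex.I * (ω : ℂ))).im := by
  intro ω hω
  have hcos : 0 < Real.cos (α * (Real.pi / 2)) := Real.cos_pos_of_mem_Ioo
    ⟨by nlinarith [hα.1, Real.pi_pos], by nlinarith [hα.2, Real.pi_pos]⟩
  have hZre := abs_cosh_add_mul_I_re_le_Ctan α β (-(β * Real.log ω))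
  rw [← real_inner_eq_re_mul_re_add_im_mul_im, phi_I_mul_ofReal _ _ _ _ hω,
    phi_I_mul_ofReal _ _ _ _ hω]
  refine one_le_real_inner_one_add ?_ ?_ ?_
  · rw [mul_assoc, re_ofReal_mul]
    exact mul_nonneg (by positivity) (re_exp_mul_add_cosh_nonneg hcos β _ hb₂ hT3₂)
  · rw [mul_assoc, re_ofReal_mul]
    exact mul_nonneg (by positivity) (re_exp_mul_add_cosh_nonneg hcos β _ hb₁ hT3₁)
  · rw [real_inner_mul_mul]
    exact mul_nonneg (normSq_nonneg _) (real_inner_add_mul_nonneg _ hb₁ hb₂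
      ((mul_le_mul_of_nonneg_left hZre (by positivity)).trans hT3₁)
      ((mul_le_mul_of_nonneg_left hZre (by positivity)).trans hT3₂))

/-- Under `a₁, a₂ > 0`, `b₁, b₂ ≥ 0`, (T1) `a₂b₁ = a₁b₂` and (T3₁), (T3₂), the storage
modulus is positive: `Re P(iω)·Re Q(iω) + Im P(iω)·Im Q(iω) ≥ 1` for every `ω > 0`. -/
theorem stmt_7 (α β a₁ a₂ b₁ b₂ : ℝ) (hα : α ∈ Set.Ioo (0:ℝ) 1) (hβ : 0 < β)
    (ha₁ : 0 < a₁) (ha₂ : 0 < a₂) (hb₁ : 0 ≤ b₁) (hb₂ : 0 ≤ b₂)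
    (hT1 : a₂ * b₁ = a₁ * b₂)
    (hT3₁ : a₁ ≥ 2 * b₁ * Ctan α β) (hT3₂ : a₂ ≥ 2 * b₂ * Ctan α β) :
    ∀ ω : ℝ, 0 < ω →
      1 ≤ (phi α β a₂ b₂ (Complex.I * (ω : ℂ))).re * (phi α β a₁ b₁ (Complex.I * (ω : ℂ))).re +
        (phi α β a₂ b₂ (Complex.I * (ω : ℂ))).im * (phi α β a₁ b₁ (Complex.I * (ω : ℂ))).im :=
  stmt_7_general α β a₁ a₂ b₁ b₂ hα hb₁ hb₂ hT3₁ hT3₂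
end

section
/- Let α ∈ (0,1), β > 0 and let a₂ > 0, b₂ ≥ 0 satisfy a₂ ≥ 2b₂·cosh(βπ/2)·√(1 + tan²(απ/2)·tanh²(βπ/2)) (restriction (T3₂)). Then P(s) = 1 + a₂·s^α + b₂·(s^{α+iβ} + s^{α−iβ}) has no zeros in the closed right half-plane: P(s) ≠ 0 for all complex s with Re s ≥ 0. Consequently M²(s) = Q(s)/P(s) has no singular points with Re s ≥ 0. -/
/-! For `s ≠ 0` write `log s = L + iθ`, so `|θ| ≤ π/2` on the closed right half-plane, and
`Re P(s) = 1 + e^{αL} (a₂ cos αθ + 2 b₂ (cosh βθ cos αθ · cos βL + sinh βθ sin αθ · sin βL))`.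
As a sinusoid in `βL`, the term multiplying `2 b₂` has amplitude
`√(cosh² βθ cos² αθ + sinh² βθ sin² αθ) = cos αθ · √(cosh² βθ + tan² αθ · sinh² βθ)`, and since
`cosh²`, `sinh²` and `tan²` grow with `|θ|` this is at most `Ctan α β · cos αθ`.
So (T3₂) makes the bracket nonnegative, and `Re P(s) ≥ 1`. -/

open Real

lemma neg_le_mul_cos_add_mul_sin {p q M : ℝ} (x : ℝ) (h : p ^ 2 + q ^ 2 ≤ M ^ 2) (hM : 0 ≤ M) :
    -M ≤ p * cos x + q * sin x := by
  have hsq : (p * cos x + q * sin x) ^ 2 ≤ M ^ 2 := by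
    nlinarith [sq_nonneg (p * sin x - q * cos x), sin_sq_add_cos_sq x]
  exact (abs_le_of_sq_le_sq' hsq hM).1

lemma Ctan_nonneg (α β : ℝ) : 0 ≤ Ctan α β := by
  unfold Ctan; positivity

lemma Ctan_sq (α β : ℝ) :
    Ctan α β ^ 2 = cosh (β * (π / 2)) ^ 2 + tan (α * (π / 2)) ^ 2 * sinh (β * (π / 2)) ^ 2 := by
  have hcosh : cosh (β * (π / 2)) ≠ 0 := (cosh_pos _).ne'
  rw [Ctan, mul_pow, sq_sqrt (by positivity), tanh_eq_sinh_div_cosh]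
  field_simp

lemma sq_tan_le_sq_tan {t A : ℝ} (ht : |t| ≤ A) (hA : A < π / 2) : tan t ^ 2 ≤ tan A ^ 2 := by
  obtain ⟨hlo, hhi⟩ := abs_le.mp ht
  have hmono := strictMonoOn_tan.monotoneOn
  have hA' : A ∈ Set.Ioo (-(π / 2)) (π / 2) := ⟨by linarith, hA⟩
  have ht' : t ∈ Set.Ioo (-(π / 2)) (π / 2) := ⟨by linarith, by linarith⟩
  have hnegA : -A ∈ Set.Ioo (-(π / 2)) (π / 2) := ⟨by linarith, by linarith⟩
  refine sq_le_sq' ?_ (hmono ht' hA' hhi)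
  rw [← tan_neg]
  exact hmono hnegA ht' hlo

lemma sq_sinh_le_sq_sinh {x y : ℝ} (h : |x| ≤ y) : sinh x ^ 2 ≤ sinh y ^ 2 := by
  rw [sq_le_sq, abs_sinh, abs_sinh, abs_of_nonneg ((abs_nonneg x).trans h)]
  exact sinh_le_sinh.2 h

lemma abs_mul_le_mul_of_abs_le {c y M : ℝ} (hc : 0 ≤ c) (hy : |y| ≤ M) : |c * y| ≤ c * M := by
  rw [abs_mul, abs_of_nonneg hc]
  exact mul_le_mul_of_nonneg_left hy hc

lemma mul_pi_div_two_lt {α : ℝ} (hα : α < 1) : α * (π / 2) < π / 2 := by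
  nlinarith [pi_pos]

lemma cos_mul_pos {α y : ℝ} (hα : α ∈ Set.Ioo (0 : ℝ) 1) (hy : |y| ≤ π / 2) :
    0 < cos (α * y) :=
  cos_pos_of_mem_Ioo (abs_lt.mp ((abs_mul_le_mul_of_abs_le hα.1.le hy).trans_lt
    (mul_pi_div_two_lt hα.2)))

lemma sq_add_sq_le_sq_Ctan_mul_cos {α β y : ℝ} (hα : α ∈ Set.Ioo (0 : ℝ) 1) (hβ : 0 ≤ β)
    (hy : |y| ≤ π / 2) :
    (cosh (β * y) * cos (α * y)) ^ 2 + (sinh (β * y) * sin (α * y)) ^ 2 ≤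
      (Ctan α β * cos (α * y)) ^ 2 := by
  have hcos := cos_mul_pos hα hy
  have hsinh := sq_sinh_le_sq_sinh (abs_mul_le_mul_of_abs_le hβ hy)
  have hsin : sin (α * y) = cos (α * y) * tan (α * y) := by
    rw [tan_eq_sin_div_cos]; field_simp
  calc (cosh (β * y) * cos (α * y)) ^ 2 + (sinh (β * y) * sin (α * y)) ^ 2
      = cos (α * y) ^ 2 * (sinh (β * y) ^ 2 + 1 + tan (α * y) ^ 2 * sinh (β * y) ^ 2) := by
        rw [hsin, mul_pow, cosh_sq]; ring
    _ ≤ cos (α * y) ^ 2 * (sinh (β * (π / 2)) ^ 2 + 1 +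
          tan (α * (π / 2)) ^ 2 * sinh (β * (π / 2)) ^ 2) := by
        gcongr _ * (?_ + 1 + ?_ * ?_)
        exact sq_tan_le_sq_tan (abs_mul_le_mul_of_abs_le hα.1.le hy)
          (mul_pi_div_two_lt hα.2)
    _ = (Ctan α β * cos (α * y)) ^ 2 := by
        rw [mul_pow, Ctan_sq, cosh_sq]; ring

lemma phi_zero {α : ℝ} (hα : α ≠ 0) (β a b : ℝ) : phi α β a b 0 = 1 := by
  have hzero : ∀ z : ℂ, z.re = α → (0 : ℂ) ^ z = 0 := fun z hz =>
    Complex.zero_cpow fun h => hα (by rw [← hz, h, Complex.zero_re])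
  simp [phi, hzero]

lemma re_phi_eq (α β a b : ℝ) {s : ℂ} (hs : s ≠ 0) :
    (phi α β a b s).re = 1 + exp (α * log ‖s‖) * (a * cos (α * s.arg) +
      2 * b * (cosh (β * s.arg) * cos (α * s.arg) * cos (β * log ‖s‖) +
        sinh (β * s.arg) * sin (α * s.arg) * sin (β * log ‖s‖))) := by
  have hlog : Complex.log s = ↑(log ‖s‖) + ↑s.arg * Complex.I := by
    apply Complex.ext <;> simp [Complex.log_re, Complex.log_im]
  simp only [phi, Complex.cpow_def_of_ne_zero hs, hlog, Complex.add_re, Complex.mul_re,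
    Complex.exp_re, Complex.add_im, Complex.mul_im, Complex.ofReal_re, Complex.ofReal_im,
    Complex.I_re, Complex.I_im, Complex.one_re, Complex.sub_re, Complex.sub_im, Complex.exp_im,
    mul_zero, zero_mul, sub_zero, add_zero, mul_one, one_mul, zero_add, zero_sub]
  generalize log ‖s‖ = L
  generalize s.arg = θ
  simp only [cosh_eq, sinh_eq, exp_sub, exp_add, exp_neg, mul_neg, neg_mul, sub_neg_eq_add,
    cos_add, cos_neg, sin_neg, mul_comm α L, mul_comm β θ, mul_comm α θ, mul_comm β L]
  field_simp
  ring

lemma one_le_re_phi {α β a b : ℝ} (hα : α ∈ Set.Ioo (0 : ℝ) 1) (hβ : 0 ≤ β) (hb : 0 ≤ b)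
    (hT3 : 2 * b * Ctan α β ≤ a) {s : ℂ} (hs : 0 ≤ s.re) : 1 ≤ (phi α β a b s).re := by
  rcases eq_or_ne s 0 with rfl | hs0
  · simp [phi_zero hα.1.ne']
  have harg : |s.arg| ≤ π / 2 := Complex.abs_arg_le_pi_div_two_iff.2 hs
  have hcos := (cos_mul_pos hα harg).le
  have hamp := neg_le_mul_cos_add_mul_sin (β * log ‖s‖)
    (sq_add_sq_le_sq_Ctan_mul_cos hα hβ harg) (mul_nonneg (Ctan_nonneg α β) hcos)
  have hbracket : 0 ≤ a * cos (α * s.arg) +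
      2 * b * (cosh (β * s.arg) * cos (α * s.arg) * cos (β * log ‖s‖) +
        sinh (β * s.arg) * sin (α * s.arg) * sin (β * log ‖s‖)) := by
    linarith [mul_le_mul_of_nonneg_left hamp (by positivity : 0 ≤ 2 * b),
      mul_le_mul_of_nonneg_right hT3 hcos]
  rw [re_phi_eq α β a b hs0]
  exact le_add_of_nonneg_right (mul_nonneg (exp_pos _).le hbracket)

theorem stmt_17_general (α β a₂ b₂ : ℝ) (hα : α ∈ Set.Ioo (0:ℝ) 1) (hβ : 0 < β)
    (hb₂ : 0 ≤ b₂) (hT3 : a₂ ≥ 2 * b₂ * Ctan α β) :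
    ∀ s : ℂ, 0 ≤ s.re → phi α β a₂ b₂ s ≠ 0 := by
  intro s hs hzero
  have hre := one_le_re_phi hα hβ.le hb₂ hT3 hs
  rw [hzero, Complex.zero_re] at hre
  norm_num at hre

/-- Under (T3₂) with `a₂ > 0`, `b₂ ≥ 0`, the function
`P(s) = 1 + a₂·s^α + b₂·(s^{α+iβ} + s^{α−iβ})` has no zeros in the closed right half-plane,
so `M²(s) = Q(s)/P(s)` has no singular points with `Re s ≥ 0`. -/
theorem stmt_17 (α β a₂ b₂ : ℝ) (hα : α ∈ Set.Ioo (0:ℝ) 1) (hβ : 0 < β)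
    (ha₂ : 0 < a₂) (hb₂ : 0 ≤ b₂) (hT3 : a₂ ≥ 2 * b₂ * Ctan α β) :
    ∀ s : ℂ, 0 ≤ s.re → phi α β a₂ b₂ s ≠ 0 :=
  stmt_17_general α β a₂ b₂ hα hβ hb₂ hT3
end
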